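/- arXiv:2001.03095 — 5 statements merged into one kernel-verified Lean document; each statement's English description precedes it below -/
import Mathlib

section
/- Let H and K be self-adjoint operators on a Hilbert space H, with K affiliated with the abelian von Neumann algebra generated by H. Suppose D₀ is a dense subspace of H contained in the domain of K such that exp(itH)·D₀ ⊆ D₀ for all real t. Then D₀ is a core for K. -/
open Filter Topology
open scoped InnerProductSpace

variable {H : Type*} [NormedAddCommGroup H] [InnerProductSpace ℂ H] [CompleteSpace H]

/-- A (typically closed, densely defined) operator `A` is affiliated with the von Neumann
algebra `M` if every unitary in the commutant of `M` leaves the domain of `A` invariant and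
commutes with `A`. -/
def Affiliated (M : VonNeumannAlgebra H) (A : H →ₗ.[ℂ] H) : Prop :=
  ∀ u : H →L[ℂ] H, u ∈ M.commutant → u ∈ unitary (H →L[ℂ] H) →
    (∀ ξ : H, ξ ∈ A.domain → u ξ ∈ A.domain) ∧
    ∀ (ξ : A.domain) (h : u ↑ξ ∈ A.domain), A ⟨u ↑ξ, h⟩ = u (A ξ)

/-- Two operators commute strongly if the von Neumann algebras they generate commute;
equivalently, there exist commuting von Neumann algebras `M`, `N` with `A` affiliated
with `M` and `B` affiliated with `N`. -/
def StronglyCommutes (A B : H →ₗ.[ℂ] H) : Prop :=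
  ∃ M N : VonNeumannAlgebra H,
    (∀ x ∈ M, ∀ y ∈ N, Commute x y) ∧ Affiliated M A ∧ Affiliated N B


/-- `U` is the strongly continuous one-parameter unitary group generated by the self-adjoint
operator `A`, i.e. `U t = exp(itA)` (characterized, as in Stone's theorem, by the group law,
strong continuity, and `d/dt U(t)ξ |_{t=0} = i A ξ` for `ξ ∈ D(A)`). -/
def IsUnitaryGroupOf (U : ℝ → H →L[ℂ] H) (A : H →ₗ.[ℂ] H) : Prop :=
  (∀ t, U t ∈ unitary (H →L[ℂ] H)) ∧ U 0 = 1 ∧ (∀ s t, U (s + t) = U s * U t) ∧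
  (∀ ξ : H, Continuous fun t => U t ξ) ∧
  ∀ ξ : A.domain, HasDerivAt (fun t => U t ↑ξ) (Complex.I • A ξ) 0

/-!
The unitary group `U t = exp(itH)` generates a von Neumann algebra `W*(U)` with which `H` is
affiliated: a bounded `u` commuting with every `U t` satisfies `⟪H φ, u ξ⟫ = ⟪φ, u H ξ⟫`, as the
derivative at `0` of the constant function `t ↦ ⟪U t φ, u U t ξ⟫`, so `u` maps `D(H*) = D(H)` into
itself and commutes with `H`. Hence `K` commutes with every unitary commuting with all `U t`.

Let `P` be the orthogonal projection onto the complement of `(K + i) D₀`. Since `D₀` is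
`U`-invariant and `K` commutes with `U`, `P` commutes with every `U t`, so `K` commutes with the
unitary `2P - 1` and therefore with `P`. For `x ∈ D₀` the vector `y = P x ∈ D(K)` satisfies
`0 = ⟪P x, (K + i) x⟫ = ⟪y, (K + i) y⟫`, whose imaginary part is `‖y‖²`; so `P` vanishes on the
dense set `D₀` and `(K + i) D₀` is dense. Finally `‖(K + i) x‖` dominates both `‖x‖` and `‖K x‖`,
so approximating `(K + i) x` by `(K + i) D₀` approximates `(x, K x)` by the graph of `K|D₀`.
-/

open scoped ComplexConjugate

section Projection

variable {𝕜 E : Type*} [RCLike 𝕜] [NormedAddCommGroup E] [InnerProductSpace 𝕜 E] [CompleteSpace E]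

theorem Submodule.commute_starProjection_orthogonal {V : Submodule 𝕜 E} {g : E →L[𝕜] E}
    (hg : V ∈ Module.End.invtSubmodule (g : E →ₗ[𝕜] E))
    (hg' : V ∈ Module.End.invtSubmodule (g.adjoint : E →ₗ[𝕜] E)) :
    Commute Vᗮ.starProjection g := by
  rw [ContinuousLinearMap.IsIdempotentElem.commute_iff Vᗮ.isIdempotentElem_starProjection,
    Submodule.range_starProjection, Submodule.ker_starProjection]
  refine ⟨ContinuousLinearMap.orthogonal_mem_invtSubmodule hg',
    ContinuousLinearMap.orthogonal_mem_invtSubmodule ?_⟩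
  rw [← ContinuousLinearMap.adjoint_adjoint g] at hg
  exact ContinuousLinearMap.orthogonal_mem_invtSubmodule hg

theorem Submodule.two_smul_starProjection_sub_one_mem_unitary (V : Submodule 𝕜 E)
    [V.HasOrthogonalProjection] : (2 : 𝕜) • V.starProjection - 1 ∈ unitary (E →L[𝕜] E) := by
  have hV : ((2 : 𝕜) • V.starProjection - 1 : E →L[𝕜] E) = V.reflection := by
    ext x
    simp [Submodule.reflection_apply, two_smul]
  rw [hV]
  exact (Unitary.linearIsometryEquiv.symm V.reflection).2

end Projection

namespace LinearPMap

section CommutesWith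

variable {𝕜 E : Type*} [NontriviallyNormedField 𝕜] [NormedAddCommGroup E] [NormedSpace 𝕜 E]

/-- `u A ⊆ A u`, expressed as invariance of the graph of `A` under `u × u`. -/
def CommutesWith (A : E →ₗ.[𝕜] E) (u : E →L[𝕜] E) : Prop :=
  ∀ x : A.domain, ((u x, u (A x)) : E × E) ∈ A.graph

variable {A : E →ₗ.[𝕜] E} {u v : E →L[𝕜] E}

theorem commutesWith_iff : A.CommutesWith u ↔ (∀ x ∈ A.domain, u x ∈ A.domain) ∧
    ∀ (x : A.domain) (h : u x ∈ A.domain), A ⟨u x, h⟩ = u (A x) := by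
  refine ⟨fun hu => ⟨fun x hx => ?_, fun x h => ?_⟩, fun ⟨hdom, happ⟩ x => ?_⟩
  · obtain ⟨y, hy : (y : E) = u x, -⟩ := A.mem_graph_iff.mp (hu ⟨x, hx⟩)
    exact hy ▸ y.2
  · obtain ⟨y, hy : (y : E) = u x, hAy : A y = u (A x)⟩ := A.mem_graph_iff.mp (hu x)
    rw [← hAy]
    congr 1
    exact Subtype.ext hy.symm
  · simpa [happ x (hdom x x.2)] using A.mem_graph ⟨u x, hdom x x.2⟩

theorem commutesWith_one : A.CommutesWith 1 :=
  A.mem_graph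

theorem CommutesWith.add (hu : A.CommutesWith u) (hv : A.CommutesWith v) :
    A.CommutesWith (u + v) :=
  fun x => A.graph.add_mem (hu x) (hv x)

theorem CommutesWith.smul (c : 𝕜) (hu : A.CommutesWith u) : A.CommutesWith (c • u) :=
  fun x => A.graph.smul_mem c (hu x)

theorem CommutesWith.domRestrict (hu : A.CommutesWith u) {D : Submodule 𝕜 E}
    (hD : ∀ x ∈ D, u x ∈ D) : (A.domRestrict D).CommutesWith u := by
  rintro ⟨x, hxD, hxA⟩
  obtain ⟨y, hy : (y : E) = u x, hAy : A y = u (A ⟨x, hxA⟩)⟩ :=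
    A.mem_graph_iff.mp (hu ⟨x, hxA⟩)
  have hyD : (y : E) ∈ (A.domRestrict D).domain := ⟨hy ▸ hD x hxD, y.2⟩
  refine (A.domRestrict D).mem_graph_iff.mpr ⟨⟨y, hyD⟩, hy, ?_⟩
  exact (domRestrict_apply rfl).trans (hAy.trans (congrArg u (domRestrict_apply rfl).symm))

end CommutesWith

section RangeAddI

variable {E : Type*} [NormedAddCommGroup E] [InnerProductSpace ℂ E] {A T : E →ₗ.[ℂ] E}

def rangeAddI (T : E →ₗ.[ℂ] E) : Submodule ℂ E :=
  LinearMap.range (T.toFun + Complex.I • T.domain.subtype)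

theorem CommutesWith.rangeAddI_mem_invtSubmodule {u : E →L[ℂ] E} (hu : T.CommutesWith u) :
    T.rangeAddI ∈ Module.End.invtSubmodule (u : E →ₗ[ℂ] E) := by
  rw [Module.End.mem_invtSubmodule]
  rintro _ ⟨x, rfl⟩
  obtain ⟨y, hy : (y : E) = u x, hTy : T y = u (T x)⟩ := T.mem_graph_iff.mp (hu x)
  refine ⟨y, ?_⟩
  change T y + Complex.I • (y : E) = u (T x + Complex.I • (x : E))
  simp [hy, hTy]

theorem IsFormalAdjoint.conj_inner_apply_self (hA : A.IsFormalAdjoint A) (x : A.domain) :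
    conj ⟪A x, (x : E)⟫_ℂ = ⟪A x, (x : E)⟫_ℂ := by
  rw [inner_conj_symm, hA]

theorem IsFormalAdjoint.norm_apply_add_I_smul_sq (hA : A.IsFormalAdjoint A) (x : A.domain) :
    ‖A x + Complex.I • (x : E)‖ ^ 2 = ‖A x‖ ^ 2 + ‖(x : E)‖ ^ 2 := by
  have him : (⟪A x, (x : E)⟫_ℂ).im = 0 := Complex.conj_eq_iff_im.mp (hA.conj_inner_apply_self x)
  rw [norm_add_sq (𝕜 := ℂ), inner_smul_right, norm_smul]
  simp [him]

theorem IsFormalAdjoint.im_inner_apply_add_I_smul (hA : A.IsFormalAdjoint A) (x : A.domain) :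
    (⟪(x : E), A x + Complex.I • (x : E)⟫_ℂ).im = ‖(x : E)‖ ^ 2 := by
  have him : (⟪(x : E), A x⟫_ℂ).im = 0 := by
    rw [← hA, ← Complex.conj_eq_iff_im, hA.conj_inner_apply_self x]
  rw [inner_add_right, inner_smul_right, inner_self_eq_norm_sq_to_K]
  simp [him, ← Complex.ofReal_pow]

theorem IsFormalAdjoint.norm_le_norm_apply_add_I_smul (hA : A.IsFormalAdjoint A) (x : A.domain) :
    ‖(x : E)‖ ≤ ‖A x + Complex.I • (x : E)‖ := by
  refine le_of_sq_le_sq ?_ (norm_nonneg _)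
  rw [hA.norm_apply_add_I_smul_sq]
  exact le_add_of_nonneg_left (sq_nonneg _)

theorem IsFormalAdjoint.norm_apply_le_norm_apply_add_I_smul (hA : A.IsFormalAdjoint A)
    (x : A.domain) : ‖A x‖ ≤ ‖A x + Complex.I • (x : E)‖ := by
  refine le_of_sq_le_sq ?_ (norm_nonneg _)
  rw [hA.norm_apply_add_I_smul_sq]
  exact le_add_of_nonneg_right (sq_nonneg _)

theorem IsFormalAdjoint.dist_graph_le (hA : A.IsFormalAdjoint A) (x y : A.domain) :
    dist (((x : E), A x) : E × E) ((y : E), A y) ≤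
      dist (A x + Complex.I • (x : E)) (A y + Complex.I • (y : E)) := by
  have hsub : A x + Complex.I • (x : E) - (A y + Complex.I • (y : E)) =
      A (x - y) + Complex.I • ((x - y : A.domain) : E) := by
    rw [map_sub, Submodule.coe_sub]
    module
  rw [Prod.dist_eq, dist_eq_norm, dist_eq_norm, dist_eq_norm, hsub, ← map_sub,
    ← Submodule.coe_sub]
  exact max_le (hA.norm_le_norm_apply_add_I_smul _) (hA.norm_apply_le_norm_apply_add_I_smul _)

theorem IsFormalAdjoint.graph_le_closure_graph (hA : A.IsFormalAdjoint A) (hTA : T ≤ A)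
    (hT : Dense (T.rangeAddI : Set E)) : A.graph ≤ T.graph.topologicalClosure := by
  rintro ⟨_, _⟩ hp
  obtain ⟨x, rfl, rfl⟩ := A.mem_graph_iff.mp hp
  rw [← SetLike.mem_coe, Submodule.topologicalClosure_coe, Metric.mem_closure_iff]
  intro ε hε
  obtain ⟨_, ⟨z, rfl⟩, hz⟩ := hT.exists_dist_lt (A x + Complex.I • (x : E)) hε
  have hTz : T z = A ⟨z, hTA.1 z.2⟩ := hTA.2 rfl
  refine ⟨((z : E), T z), T.mem_graph z, ?_⟩
  rw [hTz]
  refine (hA.dist_graph_le x ⟨z, hTA.1 z.2⟩).trans_lt ?_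
  rwa [← hTz]

end RangeAddI

section CompleteSpace

variable {E : Type*} [NormedAddCommGroup E] [InnerProductSpace ℂ E] [CompleteSpace E]
  {A T : E →ₗ.[ℂ] E}

theorem _root_.IsSelfAdjoint.isFormalAdjoint (hA : IsSelfAdjoint A) : A.IsFormalAdjoint A := by
  have h := adjoint_isFormalAdjoint hA.dense_domain
  rwa [isSelfAdjoint_def.mp hA] at h

theorem starProjection_orthogonal_rangeAddI_apply_eq_zero (hA : A.IsFormalAdjoint A)
    (hTA : T ≤ A) (hP : A.CommutesWith T.rangeAddIᗮ.starProjection) (x : T.domain) :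
    T.rangeAddIᗮ.starProjection x = 0 := by
  set P := T.rangeAddIᗮ.starProjection
  let x' : A.domain := ⟨x, hTA.1 x.2⟩
  obtain ⟨y, hy : (y : E) = P x, hAy : A y = P (A x')⟩ := A.mem_graph_iff.mp (hP x')
  have hx : A x' + Complex.I • (x : E) ∈ T.rangeAddI := ⟨x, congrArg (· + _) (hTA.2 rfl)⟩
  have hinner : ⟪(y : E), A y + Complex.I • (y : E)⟫_ℂ = 0 := by
    have hPx : A y + Complex.I • (y : E) = P (A x' + Complex.I • (x : E)) := by
      rw [hAy, hy, P.map_add, P.map_smul]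
    rw [hPx, hy, ← Submodule.inner_starProjection_left_eq_right,
      Submodule.starProjection_eq_self_iff.mpr (Submodule.starProjection_apply_mem _ _)]
    exact Submodule.inner_left_of_mem_orthogonal hx (Submodule.starProjection_apply_mem _ _)
  have hnorm : ‖(y : E)‖ ^ 2 = 0 := by
    rw [← hA.im_inner_apply_add_I_smul, hinner, Complex.zero_im]
  rw [← hy]
  simpa using hnorm

theorem dense_rangeAddI_of_commutesWith_starProjection (hA : A.IsFormalAdjoint A) (hTA : T ≤ A)
    (hT : Dense (T.domain : Set E)) (hP : A.CommutesWith T.rangeAddIᗮ.starProjection) :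
    Dense (T.rangeAddI : Set E) := by
  have hP0 : ⇑T.rangeAddIᗮ.starProjection = 0 :=
    Continuous.ext_on hT (map_continuous _) continuous_const fun x hx =>
      starProjection_orthogonal_rangeAddI_apply_eq_zero hA hTA hP ⟨x, hx⟩
  have hbot : T.rangeAddIᗮ = ⊥ := by
    rw [Submodule.eq_bot_iff]
    intro v hv
    rw [← Submodule.starProjection_eq_self_iff.mpr hv, hP0, Pi.zero_apply]
  rw [Submodule.dense_iff_topologicalClosure_eq_top,
    ← Submodule.orthogonal_orthogonal_eq_closure, hbot, Submodule.bot_orthogonal_eq_top]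

theorem dense_rangeAddI_of_commutesWith (hA : A.IsFormalAdjoint A) (hTA : T ≤ A)
    (hT : Dense (T.domain : Set E)) {G : Set (E →L[ℂ] E)} (hG : ∀ g ∈ G, g.adjoint ∈ G)
    (hTG : ∀ g ∈ G, T.CommutesWith g)
    (hAG : ∀ u ∈ unitary (E →L[ℂ] E), (∀ g ∈ G, Commute g u) → A.CommutesWith u) :
    Dense (T.rangeAddI : Set E) := by
  set P := T.rangeAddIᗮ.starProjection
  have hPG : ∀ g ∈ G, Commute g P := fun g hg =>
    (Submodule.commute_starProjection_orthogonal (hTG g hg).rangeAddI_mem_invtSubmodule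
      (hTG _ (hG g hg)).rangeAddI_mem_invtSubmodule).symm
  have hR : A.CommutesWith ((2 : ℂ) • P - 1) :=
    hAG _ (Submodule.two_smul_starProjection_sub_one_mem_unitary _) fun g hg =>
      ((hPG g hg).smul_right 2).sub_right (Commute.one_right g)
  have hP : P = (2 : ℂ)⁻¹ • (((2 : ℂ) • P - 1) + 1) := by
    rw [sub_add_cancel, smul_smul, inv_mul_cancel₀ two_ne_zero, one_smul]
  refine dense_rangeAddI_of_commutesWith_starProjection hA hTA hT ?_
  have hP' := (hR.add commutesWith_one).smul (2 : ℂ)⁻¹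
  rwa [← hP] at hP'

theorem _root_.IsSelfAdjoint.hasCore_of_dense_rangeAddI (hA : IsSelfAdjoint A)
    {D : Submodule ℂ E} (hD : D ≤ A.domain) (hR : Dense ((A.domRestrict D).rangeAddI : Set E)) :
    A.HasCore D := by
  have hDA : A.domRestrict D ≤ A := domRestrict_le
  refine ⟨hD, eq_of_eq_graph ?_⟩
  rw [← (hA.isClosed.isClosable.leIsClosable hDA).graph_closure_eq_closure_graph]
  exact le_antisymm
    (Submodule.topologicalClosure_minimal _ (le_graph_of_le hDA) hA.isClosed)
    (hA.isFormalAdjoint.graph_le_closure_graph hDA hR)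

end CompleteSpace

end LinearPMap

noncomputable def VonNeumannAlgebra.centralizer (s : Set (H →L[ℂ] H)) : VonNeumannAlgebra H where
  toStarSubalgebra := StarSubalgebra.centralizer ℂ s
  centralizer_centralizer' := by simp [Set.centralizer_centralizer_centralizer]

theorem VonNeumannAlgebra.mem_centralizer_iff {s : Set (H →L[ℂ] H)} {z : H →L[ℂ] H} :
    z ∈ VonNeumannAlgebra.centralizer s ↔ ∀ g ∈ s, g * z = z * g ∧ star g * z = z * star g :=
  StarSubalgebra.mem_centralizer_iff ℂ

theorem affiliated_iff {M : VonNeumannAlgebra H} {A : H →ₗ.[ℂ] H} :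
    Affiliated M A ↔ ∀ u ∈ M.commutant, u ∈ unitary (H →L[ℂ] H) → A.CommutesWith u := by
  simp only [Affiliated, LinearPMap.commutesWith_iff]

namespace IsUnitaryGroupOf

variable {U : ℝ → H →L[ℂ] H} {A : H →ₗ.[ℂ] H}

theorem adjoint_eq (hU : IsUnitaryGroupOf U A) (t : ℝ) : (U t).adjoint = U (-t) := by
  obtain ⟨hunit, h0, hadd, -, -⟩ := hU
  rw [← ContinuousLinearMap.star_eq_adjoint, ← one_mul (star (U t)), ← h0, ← neg_add_cancel t,
    hadd, mul_assoc, Unitary.mul_star_self_of_mem (hunit t), mul_one]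

theorem commute (hU : IsUnitaryGroupOf U A) (s t : ℝ) : Commute (U s) (U t) := by
  obtain ⟨-, -, hadd, -, -⟩ := hU
  rw [Commute, SemiconjBy, ← hadd, ← hadd, add_comm]

theorem inner_apply_map_eq (hU : IsUnitaryGroupOf U A) {u : H →L[ℂ] H}
    (hu : ∀ t, Commute (U t) u) (ξ φ : A.domain) :
    ⟪A φ, u ξ⟫_ℂ = ⟪(φ : H), u (A ξ)⟫_ℂ := by
  obtain ⟨hunit, h0, -, -, hgen⟩ := hU
  have hconst : (fun t => ⟪U t φ, u (U t ξ)⟫_ℂ) = fun _ => ⟪(φ : H), u ξ⟫_ℂ := by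
    funext t
    have hcomm : u (U t ξ) = U t (u ξ) := DFunLike.congr_fun (hu t).eq.symm (ξ : H)
    rw [hcomm]
    exact ContinuousLinearMap.inner_map_map_of_mem_unitary (hunit t) _ _
  have hderiv : HasDerivAt (fun t => ⟪U t φ, u (U t ξ)⟫_ℂ)
      (⟪U 0 φ, u (Complex.I • A ξ)⟫_ℂ + ⟪Complex.I • A φ, u (U 0 ξ)⟫_ℂ) 0 :=
    (hgen φ).inner ℂ ((u.restrictScalars ℝ).hasFDerivAt.comp_hasDerivAt (0 : ℝ) (hgen ξ))
  rw [hconst] at hderiv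
  have h := (hasDerivAt_const (0 : ℝ) ⟪(φ : H), u ξ⟫_ℂ).unique hderiv
  simp only [h0, one_apply_eq_self, map_smul, inner_smul_left, inner_smul_right,
    Complex.conj_I] at h
  have h' : Complex.I * (⟪(φ : H), u (A ξ)⟫_ℂ - ⟪A φ, u ξ⟫_ℂ) = 0 := by linear_combination -h
  rw [mul_eq_zero, sub_eq_zero] at h'
  exact (h'.resolve_left Complex.I_ne_zero).symm

theorem commutesWith (hU : IsUnitaryGroupOf U A) (hA : IsSelfAdjoint A) {u : H →L[ℂ] H}
    (hu : ∀ t, Commute (U t) u) : A.CommutesWith u := by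
  intro ξ
  have hmem : (u ξ, u (A ξ)) ∈ A.graph.adjoint := by
    rw [Submodule.mem_adjoint_iff]
    rintro _ _ hφ
    obtain ⟨φ, rfl, rfl⟩ := A.mem_graph_iff.mp hφ
    rw [hU.inner_apply_map_eq hu ξ φ, sub_self]
  rwa [← LinearPMap.adjoint_graph_eq_graph_adjoint hA.dense_domain,
    LinearPMap.isSelfAdjoint_def.mp hA] at hmem

theorem mem_centralizer_range_iff (hU : IsUnitaryGroupOf U A) {u : H →L[ℂ] H} :
    u ∈ VonNeumannAlgebra.centralizer (Set.range U) ↔ ∀ t, Commute (U t) u := by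
  simp only [VonNeumannAlgebra.mem_centralizer_iff, Set.forall_mem_range,
    ContinuousLinearMap.star_eq_adjoint, hU.adjoint_eq]
  exact ⟨fun h t => (h t).1, fun h t => ⟨h t, h (-t)⟩⟩

/-- `(centralizer (range U)).commutant` is the von Neumann algebra generated by `U`. -/
theorem affiliated (hU : IsUnitaryGroupOf U A) (hA : IsSelfAdjoint A) :
    Affiliated (VonNeumannAlgebra.centralizer (Set.range U)).commutant A := by
  rw [affiliated_iff, VonNeumannAlgebra.commutant_commutant]
  exact fun u hu _ => hU.commutesWith hA (hU.mem_centralizer_range_iff.mp hu)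

end IsUnitaryGroupOf

theorem stmt3_general (Hop K : H →ₗ.[ℂ] H)
    (hHsa : Hop.adjoint = Hop) (hKsa : K.adjoint = K)
    (haff : ∀ M : VonNeumannAlgebra H, Affiliated M Hop → Affiliated M K)
    (U : ℝ → H →L[ℂ] H) (hU : IsUnitaryGroupOf U Hop)
    (D₀ : Submodule ℂ H) (hD₀d : Dense (D₀ : Set H)) (hD₀K : D₀ ≤ K.domain)
    (hinv : ∀ t : ℝ, ∀ ξ ∈ D₀, U t ξ ∈ D₀) :
    (K.domRestrict D₀).closure = K := by
  have hK : IsSelfAdjoint K := hKsa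
  have hKU : ∀ u ∈ unitary (H →L[ℂ] H), (∀ t, Commute (U t) u) → K.CommutesWith u :=
    fun u hu hcomm => affiliated_iff.mp (haff _ (hU.affiliated hHsa)) u
      (by rwa [VonNeumannAlgebra.commutant_commutant, hU.mem_centralizer_range_iff]) hu
  have hdom : (K.domRestrict D₀).domain = D₀ := by
    rw [LinearPMap.domRestrict_domain, inf_eq_left.mpr hD₀K]
  refine (hK.hasCore_of_dense_rangeAddI hD₀K ?_).closure_eq
  refine LinearPMap.dense_rangeAddI_of_commutesWith hK.isFormalAdjoint LinearPMap.domRestrict_le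
    (by rwa [hdom]) (G := Set.range U) ?_ ?_ fun u hu hcomm => hKU u hu fun t => hcomm _ ⟨t, rfl⟩
  · rintro _ ⟨t, rfl⟩
    exact ⟨-t, (hU.adjoint_eq t).symm⟩
  · rintro _ ⟨t, rfl⟩
    exact (hKU _ (hU.1 t) fun s => hU.commute s t).domRestrict (hinv t)

/-- Proposition 1.A.4: let `Hop`, `K` be self-adjoint operators with `K` affiliated with the
abelian von Neumann algebra generated by `Hop` (expressed by: `K` is affiliated with every
von Neumann algebra with which `Hop` is affiliated). If `D₀` is a dense subspace contained in
`D(K)` which is invariant under the unitary group `exp(itHop)` for all real `t`, then `D₀` is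
a core for `K`. -/
theorem stmt3 (Hop K : H →ₗ.[ℂ] H)
    (hHd : Dense (Hop.domain : Set H)) (hKd : Dense (K.domain : Set H))
    (hHsa : Hop.adjoint = Hop) (hKsa : K.adjoint = K)
    (haff : ∀ M : VonNeumannAlgebra H, Affiliated M Hop → Affiliated M K)
    (U : ℝ → H →L[ℂ] H) (hU : IsUnitaryGroupOf U Hop)
    (D₀ : Submodule ℂ H) (hD₀d : Dense (D₀ : Set H)) (hD₀K : D₀ ≤ K.domain)
    (hinv : ∀ t : ℝ, ∀ ξ ∈ D₀, U t ξ ∈ D₀) :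
    (K.domRestrict D₀).closure = K :=
  stmt3_general Hop K hHsa hKsa haff U hU D₀ hD₀d hD₀K hinv
end

section
/- Let A and B be strongly commuting closed operators on a Hilbert space with right bounding projections {q_s} for A and {f_t} for B. Then for any vector ξ in D(A*A) ∩ D(B*B), the double limit lim_{s,t→∞} A q_s B f_t ξ exists and equals lim_{s,t→∞} B f_t A q_s ξ. -/
open Filter Topology

variable {H : Type*} [NormedAddCommGroup H] [InnerProductSpace ℂ H] [CompleteSpace H]

/-- An abstract family of "right bounding projections" `q t = χ_{[0,t]}(|A|)` of a closed
operator `A = U|A|`: orthogonal projections, increasing, converging strongly to `1`, taking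
values in `D(A)` with `A ∘ q t` bounded, lying in every von Neumann algebra with which `A` is
affiliated, and compatible with `A*A` (namely `A q_t η ∈ D(A*)` and
`A* A q_t η = q_t A* A η` whenever `η ∈ D(A*A)`). -/
structure IsRightBoundingFamily (A : H →ₗ.[ℂ] H) (q : ℝ → H →L[ℂ] H) : Prop where
  proj : ∀ t, IsIdempotentElem (q t) ∧ IsSelfAdjoint (q t)
  mono : ∀ s t, s ≤ t → q s * q t = q s
  tendsto_one : ∀ ξ : H, Tendsto (fun t => q t ξ) atTop (nhds ξ)
  mem_domain : ∀ (t : ℝ) (ξ : H), q t ξ ∈ A.domain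
  bounded : ∀ t, ∃ C, ∀ ξ : H, ‖A ⟨q t ξ, mem_domain t ξ⟩‖ ≤ C * ‖ξ‖
  mem_vN : ∀ M : VonNeumannAlgebra H, Affiliated M A → ∀ t, q t ∈ M
  compat : ∀ (t : ℝ) (ξ : H) (hξ : ξ ∈ A.domain) (hξ' : A ⟨ξ, hξ⟩ ∈ A.adjoint.domain),
    ∃ h : A ⟨q t ξ, mem_domain t ξ⟩ ∈ A.adjoint.domain,
      A.adjoint ⟨A ⟨q t ξ, mem_domain t ξ⟩, h⟩ = q t (A.adjoint ⟨A ⟨ξ, hξ⟩, hξ'⟩)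

/-!
With `T s = A q_s` and `S t = B f_t`, bounded operators lying in commuting von Neumann algebras
`M` and `N`, the identity `‖T (S ξ)‖² = ⟪T⋆T ξ, S⋆S ξ⟫` holds for `T ∈ M`, `S ∈ N`. Since the
`q_s` are compatible with `A⋆A`, `T s⋆ (T s' ξ) = q_s q_s' A⋆Aξ` for `ξ ∈ D(A⋆A)`, whence
`‖(T s - T s') (S t ξ)‖² ≤ 2 ‖(q_s - q_s') A⋆Aξ‖ ‖B⋆Bξ‖` uniformly in `t`, and symmetrically in
`A` and `B`. So `(s, t) ↦ T s (S t ξ)` is Cauchy, and `S t (T s ξ)` is the same net.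
That `T s ∈ M` follows from `T s` commuting with the unitaries of `M'`, which span `M'`.
-/

open scoped InnerProductSpace

theorem StronglyCommutes.symm {A B : H →ₗ.[ℂ] H} (h : StronglyCommutes A B) :
    StronglyCommutes B A :=
  let ⟨M, N, hMN, hA, hB⟩ := h
  ⟨N, M, fun y hy x hx => (hMN x hx y hy).symm, hB, hA⟩

namespace VonNeumannAlgebra

theorem commute_of_forall_unitary (P : VonNeumannAlgebra H) {x y : H →L[ℂ] H}
    (hx : ∀ u ∈ P, u ∈ unitary (H →L[ℂ] H) → Commute x u) (hy : y ∈ P) : Commute x y := by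
  have : IsClosed (P.toStarSubalgebra : Set (H →L[ℂ] H)) :=
    P.centralizer_centralizer ▸ Set.isClosed_centralizer _
  obtain ⟨u, c, hyu, -⟩ := CStarAlgebra.exists_sum_four_unitary (⟨y, hy⟩ : P.toStarSubalgebra)
  rw [show y = ∑ i, c i • ((u i : P.toStarSubalgebra) : H →L[ℂ] H) by
    simpa using congrArg Subtype.val hyu]
  refine Commute.sum_right _ _ _ fun i _ => (hx _ (u i : P.toStarSubalgebra).2 ?_).smul_right _
  exact ⟨congrArg Subtype.val (u i).2.1, congrArg Subtype.val (u i).2.2⟩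

theorem mem_of_forall_commute_unitary (M : VonNeumannAlgebra H) {x : H →L[ℂ] H}
    (hx : ∀ u ∈ M.commutant, u ∈ unitary (H →L[ℂ] H) → Commute x u) : x ∈ M := by
  rw [← M.commutant_commutant, mem_commutant_iff]
  exact fun g hg => (commute_of_forall_unitary _ hx hg).eq.symm

end VonNeumannAlgebra

theorem ContinuousLinearMap.norm_apply_apply_sq_le {T S : H →L[ℂ] H}
    (h : Commute (star T * T) S) (ξ : H) :
    ‖T (S ξ)‖ ^ 2 ≤ ‖(star T * T) ξ‖ * ‖(star S * S) ξ‖ := by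
  have key : ⟪T (S ξ), T (S ξ)⟫_ℂ = ⟪(star T * T) ξ, (star S * S) ξ⟫_ℂ :=
    calc ⟪T (S ξ), T (S ξ)⟫_ℂ = ⟪(star T * T) (S ξ), S ξ⟫_ℂ := by
          rw [mul_apply_eq_comp, star_eq_adjoint, adjoint_inner_left]
      _ = ⟪S ((star T * T) ξ), S ξ⟫_ℂ := by rw [← mul_apply_eq_comp, h.eq, mul_apply_eq_comp]
      _ = ⟪(star T * T) ξ, (star S * S) ξ⟫_ℂ := by
          rw [mul_apply_eq_comp (star S), star_eq_adjoint S, adjoint_inner_right]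
  rw [← inner_self_eq_norm_sq (𝕜 := ℂ), key]
  exact re_inner_le_norm _ _

theorem tendsto_norm_sub_atTop_zero {E : Type*} [SeminormedAddCommGroup E] {u : ℝ → E} {x : E}
    (hu : Tendsto u atTop (𝓝 x)) : Tendsto (fun r : ℝ × ℝ => ‖u r.1 - u r.2‖) atTop (𝓝 0) := by
  rw [← prod_atTop_atTop_eq]
  simpa using ((hu.comp tendsto_fst).sub (hu.comp tendsto_snd)).norm

namespace IsRightBoundingFamily

variable {A : H →ₗ.[ℂ] H} {q : ℝ → H →L[ℂ] H}

theorem norm_apply_le (hq : IsRightBoundingFamily A q) (s : ℝ) (v : H) : ‖q s v‖ ≤ ‖v‖ :=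
  (q s).le_of_opNorm_le (IsStarProjection.norm_le (q s) ⟨(hq.proj s).1, (hq.proj s).2⟩) v
    |>.trans_eq (one_mul _)

variable (hq : IsRightBoundingFamily A q)

noncomputable def compCLM (s : ℝ) : H →L[ℂ] H :=
  (A.toFun ∘ₗ (q s : H →ₗ[ℂ] H).codRestrict A.domain (hq.mem_domain s)).mkContinuousOfExistsBound
    (hq.bounded s)

theorem compCLM_apply (s : ℝ) (ξ : H) : hq.compCLM s ξ = A ⟨q s ξ, hq.mem_domain s ξ⟩ := rfl

theorem compCLM_mem {M : VonNeumannAlgebra H} (hA : Affiliated M A) (s : ℝ) :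
    hq.compCLM s ∈ M := by
  refine M.mem_of_forall_commute_unitary fun u hu hu' => ContinuousLinearMap.ext fun ξ => ?_
  have hqu : q s (u ξ) = u (q s ξ) :=
    congr($(VonNeumannAlgebra.mem_commutant_iff.mp hu (q s) (hq.mem_vN M hA s)) ξ)
  have hdom := (hA u hu hu').1 _ (hq.mem_domain s ξ)
  calc A ⟨q s (u ξ), _⟩ = A ⟨u (q s ξ), hdom⟩ := by simp_rw [hqu]
    _ = u (A ⟨q s ξ, _⟩) := (hA u hu hu').2 ⟨q s ξ, hq.mem_domain s ξ⟩ hdom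

theorem star_compCLM_apply (hAd : Dense (A.domain : Set H)) (s : ℝ) (η : H)
    (hη : η ∈ A.adjoint.domain) : star (hq.compCLM s) η = q s (A.adjoint ⟨η, hη⟩) := by
  refine ext_inner_right ℂ fun ζ => ?_
  rw [ContinuousLinearMap.star_eq_adjoint, ContinuousLinearMap.adjoint_inner_left, compCLM_apply,
    ← A.adjoint_isFormalAdjoint hAd ⟨η, hη⟩ ⟨q s ζ, hq.mem_domain s ζ⟩,
    ← ContinuousLinearMap.adjoint_inner_left, ← ContinuousLinearMap.star_eq_adjoint,
    (hq.proj s).2.star_eq]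

theorem star_compCLM_apply_compCLM_apply (hAd : Dense (A.domain : Set H)) (s s' : ℝ) {ξ : H}
    (hξ : ξ ∈ A.domain) (hAξ : A ⟨ξ, hξ⟩ ∈ A.adjoint.domain) :
    star (hq.compCLM s) (hq.compCLM s' ξ) = q s (q s' (A.adjoint ⟨A ⟨ξ, hξ⟩, hAξ⟩)) := by
  obtain ⟨h, hcompat⟩ := hq.compat s' ξ hξ hAξ
  rw [compCLM_apply, hq.star_compCLM_apply hAd s _ h, hcompat]

theorem star_sub_mul_sub_apply (hAd : Dense (A.domain : Set H)) (s s' : ℝ) {ξ : H}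
    (hξ : ξ ∈ A.domain) (hAξ : A ⟨ξ, hξ⟩ ∈ A.adjoint.domain) :
    (star (hq.compCLM s - hq.compCLM s') * (hq.compCLM s - hq.compCLM s')) ξ =
      (q s - q s') (q s (A.adjoint ⟨A ⟨ξ, hξ⟩, hAξ⟩) - q s' (A.adjoint ⟨A ⟨ξ, hξ⟩, hAξ⟩)) := by
  simp only [star_sub, sub_mul, mul_sub, sub_apply, mul_apply_eq_comp,
    hq.star_compCLM_apply_compCLM_apply hAd _ _ hξ hAξ, map_sub]

theorem norm_star_compCLM_mul_compCLM_apply_le (hAd : Dense (A.domain : Set H)) (s : ℝ) {ξ : H}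
    (hξ : ξ ∈ A.domain) (hAξ : A ⟨ξ, hξ⟩ ∈ A.adjoint.domain) :
    ‖(star (hq.compCLM s) * hq.compCLM s) ξ‖ ≤ ‖A.adjoint ⟨A ⟨ξ, hξ⟩, hAξ⟩‖ := by
  rw [mul_apply_eq_comp, hq.star_compCLM_apply_compCLM_apply hAd s s hξ hAξ]
  exact (hq.norm_apply_le s _).trans (hq.norm_apply_le s _)

theorem norm_compCLM_sub_apply_sq_le (hAd : Dense (A.domain : Set H)) (s s' : ℝ) {ξ : H}
    (hξ : ξ ∈ A.domain) (hAξ : A ⟨ξ, hξ⟩ ∈ A.adjoint.domain) {S : H →L[ℂ] H}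
    (hS : Commute (star (hq.compCLM s - hq.compCLM s') * (hq.compCLM s - hq.compCLM s')) S) :
    ‖(hq.compCLM s - hq.compCLM s') (S ξ)‖ ^ 2 ≤
      2 * ‖q s (A.adjoint ⟨A ⟨ξ, hξ⟩, hAξ⟩) - q s' (A.adjoint ⟨A ⟨ξ, hξ⟩, hAξ⟩)‖ *
        ‖(star S * S) ξ‖ := by
  refine (ContinuousLinearMap.norm_apply_apply_sq_le hS ξ).trans
    (mul_le_mul_of_nonneg_right ?_ (norm_nonneg _))
  set v := q s (A.adjoint ⟨A ⟨ξ, hξ⟩, hAξ⟩) - q s' (A.adjoint ⟨A ⟨ξ, hξ⟩, hAξ⟩)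
  calc ‖(star (hq.compCLM s - hq.compCLM s') * (hq.compCLM s - hq.compCLM s')) ξ‖
      = ‖q s v - q s' v‖ := by rw [hq.star_sub_mul_sub_apply hAd s s' hξ hAξ, sub_apply]
    _ ≤ ‖q s v‖ + ‖q s' v‖ := norm_sub_le _ _
    _ ≤ 2 * ‖v‖ := by linarith [hq.norm_apply_le s v, hq.norm_apply_le s' v]

theorem commute_compCLM {B : H →ₗ.[ℂ] H} {f : ℝ → H →L[ℂ] H} (hf : IsRightBoundingFamily B f)
    (hAB : StronglyCommutes A B) (s t : ℝ) : Commute (hq.compCLM s) (hf.compCLM t) := by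
  obtain ⟨M, N, hMN, hAM, hBN⟩ := hAB
  exact hMN _ (hq.compCLM_mem hAM s) _ (hf.compCLM_mem hBN t)

theorem norm_compCLM_sub_apply_compCLM_apply_le {B : H →ₗ.[ℂ] H} {f : ℝ → H →L[ℂ] H}
    (hf : IsRightBoundingFamily B f) (hAB : StronglyCommutes A B)
    (hAd : Dense (A.domain : Set H)) (hBd : Dense (B.domain : Set H)) {ξ : H}
    (hξA : ξ ∈ A.domain) (hξB : ξ ∈ B.domain) (hAA : A ⟨ξ, hξA⟩ ∈ A.adjoint.domain)
    (hBB : B ⟨ξ, hξB⟩ ∈ B.adjoint.domain) (s s' t : ℝ) :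
    ‖(hq.compCLM s - hq.compCLM s') (hf.compCLM t ξ)‖ ≤
      √(2 * ‖q s (A.adjoint ⟨A ⟨ξ, hξA⟩, hAA⟩) - q s' (A.adjoint ⟨A ⟨ξ, hξA⟩, hAA⟩)‖ *
        ‖B.adjoint ⟨B ⟨ξ, hξB⟩, hBB⟩‖) := by
  obtain ⟨M, N, hMN, hAM, hBN⟩ := hAB
  have hD : hq.compCLM s - hq.compCLM s' ∈ M :=
    sub_mem (hq.compCLM_mem hAM s) (hq.compCLM_mem hAM s')
  refine Real.le_sqrt_of_sq_le ((hq.norm_compCLM_sub_apply_sq_le hAd s s' hξA hAA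
    (hMN _ (mul_mem (star_mem hD) hD) _ (hf.compCLM_mem hBN t))).trans ?_)
  exact mul_le_mul_of_nonneg_left (hf.norm_star_compCLM_mul_compCLM_apply_le hBd t hξB hBB)
    (by positivity)

theorem cauchySeq_compCLM_apply_compCLM_apply {B : H →ₗ.[ℂ] H} {f : ℝ → H →L[ℂ] H}
    (hf : IsRightBoundingFamily B f) (hAB : StronglyCommutes A B)
    (hAd : Dense (A.domain : Set H)) (hBd : Dense (B.domain : Set H)) {ξ : H}
    (hξA : ξ ∈ A.domain) (hξB : ξ ∈ B.domain) (hAA : A ⟨ξ, hξA⟩ ∈ A.adjoint.domain)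
    (hBB : B ⟨ξ, hξB⟩ ∈ B.adjoint.domain) :
    CauchySeq fun st : ℝ × ℝ => hq.compCLM st.1 (hf.compCLM st.2 ξ) := by
  set wA := A.adjoint ⟨A ⟨ξ, hξA⟩, hAA⟩
  set wB := B.adjoint ⟨B ⟨ξ, hξB⟩, hBB⟩
  have hdist : ∀ p : (ℝ × ℝ) × (ℝ × ℝ),
      dist (hq.compCLM p.1.1 (hf.compCLM p.1.2 ξ)) (hq.compCLM p.2.1 (hf.compCLM p.2.2 ξ)) ≤
        √(2 * ‖q p.1.1 wA - q p.2.1 wA‖ * ‖wB‖) + √(2 * ‖f p.1.2 wB - f p.2.2 wB‖ * ‖wA‖) := by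
    rintro ⟨⟨s, t⟩, ⟨s', t'⟩⟩
    have hsplit : hq.compCLM s (hf.compCLM t ξ) - hq.compCLM s' (hf.compCLM t' ξ) =
        (hq.compCLM s - hq.compCLM s') (hf.compCLM t ξ) +
          (hf.compCLM t - hf.compCLM t') (hq.compCLM s' ξ) := by
      rw [sub_apply, sub_apply, ← mul_apply_eq_comp (hf.compCLM t),
        ← mul_apply_eq_comp (hf.compCLM t'), ← (hq.commute_compCLM hf hAB s' t).eq,
        ← (hq.commute_compCLM hf hAB s' t').eq, mul_apply_eq_comp, mul_apply_eq_comp]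
      abel
    rw [dist_eq_norm, hsplit]
    exact (norm_add_le _ _).trans (add_le_add
      (hq.norm_compCLM_sub_apply_compCLM_apply_le hf hAB hAd hBd hξA hξB hAA hBB s s' t)
      (hf.norm_compCLM_sub_apply_compCLM_apply_le hq hAB.symm hBd hAd hξB hξA hBB hAA t t' s'))
  have hproj₁ : Tendsto (fun p : (ℝ × ℝ) × (ℝ × ℝ) => (p.1.1, p.2.1)) atTop atTop :=
    tendsto_atTop_atTop_of_monotone (fun _ _ h => ⟨h.1.1, h.2.1⟩)
      fun r => ⟨((r.1, 0), (r.2, 0)), le_rfl⟩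
  have hproj₂ : Tendsto (fun p : (ℝ × ℝ) × (ℝ × ℝ) => (p.1.2, p.2.2)) atTop atTop :=
    tendsto_atTop_atTop_of_monotone (fun _ _ h => ⟨h.1.2, h.2.2⟩)
      fun r => ⟨((0, r.1), (0, r.2)), le_rfl⟩
  have hlim : Tendsto (fun p : (ℝ × ℝ) × (ℝ × ℝ) =>
      √(2 * ‖q p.1.1 wA - q p.2.1 wA‖ * ‖wB‖) + √(2 * ‖f p.1.2 wB - f p.2.2 wB‖ * ‖wA‖))
      atTop (𝓝 0) := by
    simpa using
      ((((tendsto_norm_sub_atTop_zero (hq.tendsto_one wA)).comp hproj₁).const_mul 2).mul_const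
        ‖wB‖).sqrt.add
      ((((tendsto_norm_sub_atTop_zero (hf.tendsto_one wB)).comp hproj₂).const_mul 2).mul_const
        ‖wA‖).sqrt
  exact cauchySeq_iff_tendsto_dist_atTop_0.2 (squeeze_zero (fun _ => dist_nonneg) hdist hlim)

end IsRightBoundingFamily

theorem stmt4_general (A B : H →ₗ.[ℂ] H)
    (hAd : Dense (A.domain : Set H)) (hBd : Dense (B.domain : Set H))
    (hAB : StronglyCommutes A B)
    (q f : ℝ → H →L[ℂ] H)
    (hq : IsRightBoundingFamily A q) (hf : IsRightBoundingFamily B f)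
    (ξ : H) (hξA : ξ ∈ A.domain) (hξB : ξ ∈ B.domain)
    (hAA : A ⟨ξ, hξA⟩ ∈ A.adjoint.domain)   -- `ξ ∈ D(A*A)`
    (hBB : B ⟨ξ, hξB⟩ ∈ B.adjoint.domain) : -- `ξ ∈ D(B*B)`
    ∃ L : H,
      Tendsto (fun st : ℝ × ℝ =>
        A ⟨q st.1 (B ⟨f st.2 ξ, hf.mem_domain st.2 ξ⟩), hq.mem_domain st.1 _⟩)
        (atTop ×ˢ atTop) (nhds L) ∧
      Tendsto (fun st : ℝ × ℝ =>
        B ⟨f st.2 (A ⟨q st.1 ξ, hq.mem_domain st.1 ξ⟩), hf.mem_domain st.2 _⟩)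
        (atTop ×ˢ atTop) (nhds L) := by
  obtain ⟨L, hL⟩ := cauchySeq_tendsto_of_complete
    (hq.cauchySeq_compCLM_apply_compCLM_apply hf hAB hAd hBd hξA hξB hAA hBB)
  rw [← prod_atTop_atTop_eq] at hL
  exact ⟨L, hL, hL.congr fun st => congr($((hq.commute_compCLM hf hAB st.1 st.2).eq) ξ)⟩

/-- Lemma 1.A.5: let `A`, `B` be strongly commuting densely defined closed operators with
right bounding projections `{q s}` (for `A`) and `{f t}` (for `B`). Then for any
`ξ ∈ D(A*A) ∩ D(B*B)` the double limits `lim_{s,t→∞} A q_s B f_t ξ` and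
`lim_{s,t→∞} B f_t A q_s ξ` exist and are equal. -/
theorem stmt4 (A B : H →ₗ.[ℂ] H)
    (hAc : A.IsClosed) (hBc : B.IsClosed)
    (hAd : Dense (A.domain : Set H)) (hBd : Dense (B.domain : Set H))
    (hAB : StronglyCommutes A B)
    (q f : ℝ → H →L[ℂ] H)
    (hq : IsRightBoundingFamily A q) (hf : IsRightBoundingFamily B f)
    (ξ : H) (hξA : ξ ∈ A.domain) (hξB : ξ ∈ B.domain)
    (hAA : A ⟨ξ, hξA⟩ ∈ A.adjoint.domain)   -- `ξ ∈ D(A*A)`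
    (hBB : B ⟨ξ, hξB⟩ ∈ B.adjoint.domain) : -- `ξ ∈ D(B*B)`
    ∃ L : H,
      Tendsto (fun st : ℝ × ℝ =>
        A ⟨q st.1 (B ⟨f st.2 ξ, hf.mem_domain st.2 ξ⟩), hq.mem_domain st.1 _⟩)
        (atTop ×ˢ atTop) (nhds L) ∧
      Tendsto (fun st : ℝ × ℝ =>
        B ⟨f st.2 (A ⟨q st.1 ξ, hq.mem_domain st.1 ξ⟩), hf.mem_domain st.2 _⟩)
        (atTop ×ˢ atTop) (nhds L) :=
  stmt4_general A B hAd hBd hAB q f hq hf ξ hξA hξB hAA hBB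
end

section
/- Let A and B be strongly commuting closed operators on a Hilbert space H, and let ξ ∈ D(AB) ∩ D(A). Then ξ ∈ D(BA) and ABξ = BAξ. -/
/-!
Let `P` be the orthogonal projection of `H ⊕ H` onto the closed graph of `B`. A unitary `u`
commuting with `N` maps the graph of `B` onto itself (so does `u*`), hence `u ⊕ u` commutes with
`P`, and the four blocks of `P` commute with all unitaries of `N'`. A von Neumann algebra is
spanned by its unitaries, so the blocks lie in `N'' = N ⊆ M'`, and for the same reason every
`T ∈ M'` satisfies `T A ⊆ A T`. Applying `A` blockwise to `P (ξ, Bξ) = (ξ, Bξ)` then gives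
`P (Aξ, ABξ) = (Aξ, ABξ)`, i.e. `(Aξ, ABξ)` lies in the graph of `B`.
-/

open Filter Topology

variable {H : Type*} [NormedAddCommGroup H] [InnerProductSpace ℂ H] [CompleteSpace H]

namespace VonNeumannAlgebra

theorem isClosed (W : VonNeumannAlgebra H) : IsClosed (W : Set (H →L[ℂ] H)) := by
  rw [← W.centralizer_centralizer]
  exact Set.isClosed_centralizer _

theorem mem_span_unitary (W : VonNeumannAlgebra H) {x : H →L[ℂ] H} (hx : x ∈ W) :
    x ∈ Submodule.span ℂ {u | u ∈ W ∧ u ∈ unitary (H →L[ℂ] H)} := by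
  have : IsClosed (W.toStarSubalgebra : Set (H →L[ℂ] H)) := W.isClosed
  have hspan := congrArg (Submodule.map W.toStarSubalgebra.subtype.toLinearMap)
    (CStarAlgebra.span_unitary W.toStarSubalgebra)
  rw [Submodule.map_span, Submodule.map_top] at hspan
  have hx' : x ∈ LinearMap.range W.toStarSubalgebra.subtype.toLinearMap := ⟨⟨x, hx⟩, rfl⟩
  rw [← hspan] at hx'
  refine Submodule.span_mono ?_ hx'
  rintro _ ⟨u, hu, rfl⟩
  exact ⟨u.2, Unitary.map_mem W.toStarSubalgebra.subtype hu⟩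

theorem mem_commutant_of_forall_unitary (W : VonNeumannAlgebra H) {T : H →L[ℂ] H}
    (hT : ∀ u ∈ W, u ∈ unitary (H →L[ℂ] H) → u * T = T * u) : T ∈ W.commutant := by
  refine mem_commutant_iff.2 fun g hg => ?_
  have hg' : g ∈ (Subalgebra.centralizer ℂ {T}).toSubmodule := by
    refine Submodule.span_le.2 (fun u hu => ?_) (W.mem_span_unitary hg)
    simpa [Set.mem_centralizer_iff] using (hT u hu.1 hu.2).symm
  exact (hg' T rfl).symm

end VonNeumannAlgebra

namespace LinearPMap

variable {𝕜 E : Type*} [NormedField 𝕜] [NormedAddCommGroup E] [NormedSpace 𝕜 E]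

/-- The bounded operators `T` with `T A ⊆ A T`. -/
def commutant (A : E →ₗ.[𝕜] E) : Submodule 𝕜 (E →L[𝕜] E) where
  carrier := {T | ∀ p ∈ A.graph, (T p.1, T p.2) ∈ A.graph}
  zero_mem' _ _ := by simp
  add_mem' {S T} hS hT p hp := by simpa using A.graph.add_mem (hS p hp) (hT p hp)
  smul_mem' c T hT p hp := by simpa using A.graph.smul_mem c (hT p hp)

end LinearPMap

theorem Affiliated.mem_commutant {M : VonNeumannAlgebra H} {A : H →ₗ.[ℂ] H} (hA : Affiliated M A)
    {T : H →L[ℂ] H} (hT : T ∈ M.commutant) : T ∈ A.commutant := by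
  refine Submodule.span_le.2 ?_ (M.commutant.mem_span_unitary hT)
  rintro u ⟨huM, hu⟩ p hp
  obtain ⟨x, hx₁, hx₂⟩ := A.mem_graph_iff.1 hp
  rw [← hx₁, ← hx₂]
  obtain ⟨hdom, hcomm⟩ := hA u huM hu
  simpa [hcomm x (hdom x x.2)] using A.mem_graph ⟨u x, hdom x x.2⟩

section BlockEntries

variable {𝕜 E ι : Type*} [NormedField 𝕜] [NormedAddCommGroup E] [NormedSpace 𝕜 E] [DecidableEq ι]

def ContinuousLinearMap.blockEntry (Q : PiLp 2 (fun _ : ι => E) →L[𝕜] PiLp 2 (fun _ : ι => E))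
    (i j : ι) : E →L[𝕜] E :=
  PiLp.proj 2 (fun _ => E) i ∘L Q ∘L
    ((PiLp.continuousLinearEquiv 2 𝕜 (fun _ : ι => E)).symm : (ι → E) →L[𝕜] PiLp 2 _) ∘L
      ContinuousLinearMap.single 𝕜 (fun _ => E) j

namespace ContinuousLinearMap

variable (Q : PiLp 2 (fun _ : ι => E) →L[𝕜] PiLp 2 (fun _ : ι => E))

theorem blockEntry_apply (i j : ι) (x : E) : Q.blockEntry i j x = Q (PiLp.single 2 j x) i := rfl

theorem apply_eq_sum_blockEntry [Fintype ι] (v : PiLp 2 (fun _ : ι => E)) (i : ι) :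
    Q v i = ∑ j, Q.blockEntry i j (v j) := by
  conv_lhs => rw [← WithLp.toLp_ofLp 2 v, ← Finset.univ_sum_single (WithLp.ofLp v)]
  simp only [WithLp.toLp_sum, map_sum, WithLp.ofLp_sum, Finset.sum_apply, PiLp.toLp_single,
    blockEntry_apply]

theorem blockEntry_commute {T : E →L[𝕜] E}
    (hQ : ∀ v, Q (WithLp.toLp 2 fun i => T (v i)) = WithLp.toLp 2 fun i => T (Q v i)) (i j : ι) :
    T * Q.blockEntry i j = Q.blockEntry i j * T := by
  ext x
  have hsingle : (WithLp.toLp 2 fun k => T (PiLp.single (β := fun _ : ι => E) 2 j x k)) =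
      PiLp.single 2 j (T x) := by
    ext k
    by_cases hk : k = j <;> simp [hk]
  have := congrArg (· i) (hQ (PiLp.single 2 j x))
  rw [hsingle] at this
  exact this.symm

theorem mem_graph_of_blockEntry_mem_commutant [Fintype ι] {A : E →ₗ.[𝕜] E}
    (hQ : ∀ i j, Q.blockEntry i j ∈ A.commutant) {v w : PiLp 2 (fun _ : ι => E)}
    (hvw : ∀ j, (v j, w j) ∈ A.graph) (i : ι) : (Q v i, Q w i) ∈ A.graph := by
  rw [apply_eq_sum_blockEntry Q _ i, apply_eq_sum_blockEntry Q _ i, prod_mk_sum]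
  exact A.graph.sum_mem fun j _ => hQ i j _ (hvw j)

end ContinuousLinearMap

end BlockEntries

section HilbertGraph

variable {𝕜 E : Type*} [RCLike 𝕜] [NormedAddCommGroup E] [InnerProductSpace 𝕜 E]

theorem Submodule.starProjection_comm_of_map_eq {K : Submodule 𝕜 E} [K.HasOrthogonalProjection]
    (f : E ≃ₗᵢ[𝕜] E) (hK : K.map (f.toLinearEquiv : E →ₗ[𝕜] E) = K) (x : E) :
    K.starProjection (f x) = f (K.starProjection x) := by
  have := K.starProjection_map_apply f (f x)
  simpa only [f.symm_apply_apply, hK] using this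

namespace LinearPMap

/-- The graph of `B` inside the Hilbert sum `E ⊕ E`, modelled as `PiLp 2` over `Fin 2` because
`E × E` carries the sup norm. -/
def hilbertGraph (B : E →ₗ.[𝕜] E) : Submodule 𝕜 (PiLp 2 fun _ : Fin 2 => E) :=
  B.graph.comap ((PiLp.projₗ 2 (fun _ => E) 0).prod (PiLp.projₗ 2 (fun _ => E) 1))

variable {B : E →ₗ.[𝕜] E}

theorem mem_hilbertGraph {v : PiLp 2 fun _ : Fin 2 => E} :
    v ∈ B.hilbertGraph ↔ (v 0, v 1) ∈ B.graph := Iff.rfl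

theorem IsClosed.isClosed_hilbertGraph (hB : B.IsClosed) :
    _root_.IsClosed (B.hilbertGraph : Set (PiLp 2 fun _ : Fin 2 => E)) :=
  hB.preimage <|
    (PiLp.proj 2 (fun _ => E) 0).continuous.prodMk (PiLp.proj 2 (fun _ => E) 1).continuous

variable [CompleteSpace E]

theorem hilbertGraph_map_unitary {u : unitary (E →L[𝕜] E)} (hu : (u : E →L[𝕜] E) ∈ B.commutant)
    (hu' : (star u : E →L[𝕜] E) ∈ B.commutant) :
    B.hilbertGraph.map (LinearIsometryEquiv.piLpCongrRight 2
      fun _ => Unitary.linearIsometryEquiv u).toLinearEquiv.toLinearMap = B.hilbertGraph := by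
  refine le_antisymm (Submodule.map_le_iff_le_comap.2 fun v hv => hu _ hv) fun v hv => ?_
  refine ⟨WithLp.toLp 2 fun i => (star u : E →L[𝕜] E) (v i), hu' _ hv, ?_⟩
  ext i
  change ((u : E →L[𝕜] E) * star (u : E →L[𝕜] E)) (v i) = v i
  simp

theorem starProjection_hilbertGraph_blockEntry_commute [B.hilbertGraph.HasOrthogonalProjection]
    {u : E →L[𝕜] E} (hu : u ∈ unitary (E →L[𝕜] E)) (huB : u ∈ B.commutant)
    (hu'B : star u ∈ B.commutant) (i j : Fin 2) :
    u * B.hilbertGraph.starProjection.blockEntry i j =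
      B.hilbertGraph.starProjection.blockEntry i j * u :=
  ContinuousLinearMap.blockEntry_commute _ (Submodule.starProjection_comm_of_map_eq _
    (hilbertGraph_map_unitary (u := ⟨u, hu⟩) huB hu'B)) i j

end LinearPMap

end HilbertGraph

theorem Affiliated.blockEntry_starProjection_hilbertGraph_mem {N : VonNeumannAlgebra H}
    {B : H →ₗ.[ℂ] H} (hB : Affiliated N B) [B.hilbertGraph.HasOrthogonalProjection] (i j : Fin 2) :
    B.hilbertGraph.starProjection.blockEntry i j ∈ N := by
  rw [← N.commutant_commutant]
  exact N.commutant.mem_commutant_of_forall_unitary fun u hu hu' =>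
    LinearPMap.starProjection_hilbertGraph_blockEntry_commute hu' (hB.mem_commutant hu)
      (hB.mem_commutant (star_mem hu)) i j

theorem stmt5_general (A B : H →ₗ.[ℂ] H)
    (hBc : B.IsClosed)
    (hAB : StronglyCommutes A B)
    (ξ : H) (hξB : ξ ∈ B.domain) (hBξ : B ⟨ξ, hξB⟩ ∈ A.domain) (hξA : ξ ∈ A.domain) :
    ∃ h' : A ⟨ξ, hξA⟩ ∈ B.domain,
      B ⟨A ⟨ξ, hξA⟩, h'⟩ = A ⟨B ⟨ξ, hξB⟩, hBξ⟩ := by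
  obtain ⟨M, N, hMN, hA, hB⟩ := hAB
  have : CompleteSpace B.hilbertGraph := hBc.isClosed_hilbertGraph.completeSpace_coe
  set Q := B.hilbertGraph.starProjection
  have hQ : ∀ i j, Q.blockEntry i j ∈ A.commutant := fun i j => hA.mem_commutant <|
    VonNeumannAlgebra.mem_commutant_iff.2 fun m hm =>
      hMN m hm _ (hB.blockEntry_starProjection_hilbertGraph_mem i j)
  let v : PiLp 2 fun _ : Fin 2 => H := WithLp.toLp 2 ![ξ, B ⟨ξ, hξB⟩]
  let w : PiLp 2 fun _ : Fin 2 => H := WithLp.toLp 2 ![A ⟨ξ, hξA⟩, A ⟨B ⟨ξ, hξB⟩, hBξ⟩]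
  have hvw : ∀ j, (v j, w j) ∈ A.graph := by
    intro j
    fin_cases j
    exacts [A.mem_graph ⟨ξ, hξA⟩, A.mem_graph ⟨_, hBξ⟩]
  have hv : Q v = v := Submodule.starProjection_eq_self_iff.2 (B.mem_graph ⟨ξ, hξB⟩)
  have hw : Q w = w := by
    ext i
    have := Q.mem_graph_of_blockEntry_mem_commutant hQ hvw i
    rw [hv] at this
    exact A.mem_graph_snd_inj this (hvw i) rfl
  have hwB : (A ⟨ξ, hξA⟩, A ⟨B ⟨ξ, hξB⟩, hBξ⟩) ∈ B.graph :=
    LinearPMap.mem_hilbertGraph.1 (hw ▸ B.hilbertGraph.starProjection_apply_mem w)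
  exact ⟨B.mem_domain_of_mem_graph hwB, ((B.image_iff _).2 hwB).symm⟩

/-- Proposition 1.A.6(a): if `A` and `B` are strongly commuting densely defined closed
operators and `ξ ∈ D(AB) ∩ D(A)`, then `ξ ∈ D(BA)` and `ABξ = BAξ`. -/
theorem stmt5 (A B : H →ₗ.[ℂ] H)
    (hAc : A.IsClosed) (hBc : B.IsClosed)
    (hAd : Dense (A.domain : Set H)) (hBd : Dense (B.domain : Set H))
    (hAB : StronglyCommutes A B)
    (ξ : H) (hξB : ξ ∈ B.domain) (hBξ : B ⟨ξ, hξB⟩ ∈ A.domain) (hξA : ξ ∈ A.domain) :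
    ∃ h' : A ⟨ξ, hξA⟩ ∈ B.domain,
      B ⟨A ⟨ξ, hξA⟩, h'⟩ = A ⟨B ⟨ξ, hξB⟩, hBξ⟩ :=
  stmt5_general A B hBc hAB ξ hξB hBξ hξA
end

section
/- Let M(I) and M(I') be commuting von Neumann algebras on a Hilbert space H₀ with a joint cyclic and separating vector Ω, let ξ ∈ H₀, and define the operator A_ξ with domain M(I')Ω by A_ξ(yΩ) = yξ for y ∈ M(I'). If ξ lies in the domain of the Tomita operator S_I (the closure of xΩ ↦ x*Ω for x ∈ M(I)), then A_ξ is well-defined and preclosed. -/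
/-!
Both parts come from moving `y ∈ M'` past approximants `xₙ ∈ M` of `ξ`. If `wΩ = 0` with
`w ∈ M'`, then `wξ = lim w xₙ Ω = lim xₙ w Ω = 0`. For `y, z ∈ M'` and `η = S_I ξ` the same
commutation together with `xₙ* ∈ M` gives `⟪zΩ, yξ⟫ = ⟪zη, yΩ⟫`; hence a limit `ζ` of `yₙξ` with
`yₙΩ → 0` is orthogonal to `M'Ω`. Finally `M'Ω` is dense: the projection onto `(M'Ω)ᗮ` commutes
with `M'`, so it lies in `M'' = M`, and it kills `Ω`, so it vanishes because `Ω` separates `M`.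
-/

open Filter Topology

variable {H₀ : Type*} [NormedAddCommGroup H₀] [InnerProductSpace ℂ H₀] [CompleteSpace H₀]

open scoped InnerProductSpace

namespace VonNeumannAlgebra

noncomputable def orbit (N : VonNeumannAlgebra H₀) (Ω : H₀) : Submodule ℂ H₀ :=
  N.toStarSubalgebra.toSubalgebra.toSubmodule.map
    (ContinuousLinearMap.apply ℂ H₀ Ω : (H₀ →L[ℂ] H₀) →ₗ[ℂ] H₀)

variable {N : VonNeumannAlgebra H₀} {Ω : H₀}

theorem mem_orbit {v : H₀} : v ∈ N.orbit Ω ↔ ∃ y ∈ N, y Ω = v := Iff.rfl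

theorem orbit_mem_invtSubmodule {y : H₀ →L[ℂ] H₀} (hy : y ∈ N) :
    N.orbit Ω ∈ Module.End.invtSubmodule (y : H₀ →ₗ[ℂ] H₀) := by
  rintro _ ⟨z, hz, rfl⟩
  exact mem_orbit.2 ⟨y * z, mul_mem hy hz, rfl⟩

theorem orthogonal_orbit_mem_invtSubmodule {y : H₀ →L[ℂ] H₀} (hy : y ∈ N) :
    (N.orbit Ω)ᗮ ∈ Module.End.invtSubmodule (y : H₀ →ₗ[ℂ] H₀) :=
  ContinuousLinearMap.orthogonal_mem_invtSubmodule <|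
    orbit_mem_invtSubmodule (by simpa [ContinuousLinearMap.star_eq_adjoint] using star_mem hy)

theorem starProjection_orthogonal_orbit_mem_commutant :
    (N.orbit Ω)ᗮ.starProjection ∈ N.commutant := by
  rw [IsStarProjection.mem_iff isStarProjection_starProjection, commutant_commutant,
    Submodule.range_starProjection]
  exact fun y hy => orthogonal_orbit_mem_invtSubmodule hy

theorem orthogonal_orbit_commutant_eq_bot {M : VonNeumannAlgebra H₀}
    (hseparating : ∀ x : H₀ →L[ℂ] H₀, x ∈ M → x Ω = 0 → x = 0) :
    (M.commutant.orbit Ω)ᗮ = ⊥ := by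
  have hΩ : Ω ∈ M.commutant.orbit Ω := mem_orbit.2 ⟨1, one_mem _, rfl⟩
  have hq : (M.commutant.orbit Ω)ᗮ.starProjection = 0 := by
    refine hseparating _ ?_ ?_
    · simpa using starProjection_orthogonal_orbit_mem_commutant (N := M.commutant) (Ω := Ω)
    · exact (Submodule.starProjection_apply_eq_zero_iff _).2
        (Submodule.le_orthogonal_orthogonal _ hΩ)
  rw [← Submodule.range_starProjection (M.commutant.orbit Ω)ᗮ, hq]
  exact LinearMap.range_zero

theorem apply_comm_of_mem_commutant {M : VonNeumannAlgebra H₀} {x y : H₀ →L[ℂ] H₀}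
    (hx : x ∈ M) (hy : y ∈ M.commutant) (v : H₀) : y (x v) = x (y v) :=
  congr($((mem_commutant_iff.1 hy x hx).symm) v)

section TomitaDomain

variable {M : VonNeumannAlgebra H₀} {Ω ξ η : H₀} {x : ℕ → H₀ →L[ℂ] H₀}
  (hxM : ∀ n, x n ∈ M) (hxξ : Tendsto (fun n => x n Ω) atTop (𝓝 ξ))
include hxM hxξ

theorem apply_eq_zero_of_tendsto {w : H₀ →L[ℂ] H₀} (hw : w ∈ M.commutant) (hwΩ : w Ω = 0) :
    w ξ = 0 := by
  refine tendsto_nhds_unique ((w.continuous.tendsto ξ).comp hxξ) ?_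
  simp only [Function.comp_def, apply_comm_of_mem_commutant (hxM _) hw, hwΩ, map_zero]
  exact tendsto_const_nhds

theorem inner_apply_eq_of_tendsto (hxη : Tendsto (fun n => star (x n) Ω) atTop (𝓝 η))
    {y z : H₀ →L[ℂ] H₀} (hy : y ∈ M.commutant) (hz : z ∈ M.commutant) :
    ⟪z Ω, y ξ⟫_ℂ = ⟪z η, y Ω⟫_ℂ := by
  have hlim : Tendsto (fun n => ⟪z Ω, y (x n Ω)⟫_ℂ) atTop (𝓝 ⟪z Ω, y ξ⟫_ℂ) :=
    tendsto_const_nhds.inner ((y.continuous.tendsto ξ).comp hxξ)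
  have hlim' : Tendsto (fun n => ⟪z (star (x n) Ω), y Ω⟫_ℂ) atTop (𝓝 ⟪z η, y Ω⟫_ℂ) :=
    ((z.continuous.tendsto η).comp hxη).inner tendsto_const_nhds
  refine tendsto_nhds_unique hlim (hlim'.congr fun n => ?_)
  rw [apply_comm_of_mem_commutant (star_mem (hxM n)) hz, ContinuousLinearMap.star_eq_adjoint,
    ContinuousLinearMap.adjoint_inner_left, apply_comm_of_mem_commutant (hxM n) hy]

theorem eq_zero_of_tendsto_of_separating
    (hseparating : ∀ x : H₀ →L[ℂ] H₀, x ∈ M → x Ω = 0 → x = 0)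
    (hxη : Tendsto (fun n => star (x n) Ω) atTop (𝓝 η)) {y : ℕ → H₀ →L[ℂ] H₀} {ζ : H₀}
    (hy : ∀ n, y n ∈ M.commutant) (hyΩ : Tendsto (fun n => y n Ω) atTop (𝓝 0))
    (hyξ : Tendsto (fun n => y n ξ) atTop (𝓝 ζ)) : ζ = 0 := by
  suffices ζ ∈ (M.commutant.orbit Ω)ᗮ by
    simpa [orthogonal_orbit_commutant_eq_bot hseparating] using this
  rw [Submodule.mem_orthogonal]
  rintro _ ⟨z, hz, rfl⟩
  have hlim : Tendsto (fun n => ⟪z η, y n Ω⟫_ℂ) atTop (𝓝 0) := by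
    simpa using (tendsto_const_nhds (x := z η)).inner (𝕜 := ℂ) hyΩ
  exact tendsto_nhds_unique (tendsto_const_nhds.inner hyξ)
    (hlim.congr fun n => (inner_apply_eq_of_tendsto hxM hxξ hxη (hy n) hz).symm)

end TomitaDomain

end VonNeumannAlgebra

open VonNeumannAlgebra in
theorem stmt9_general (M : VonNeumannAlgebra H₀) (Ω : H₀)
    (hseparating : ∀ x : H₀ →L[ℂ] H₀, x ∈ M → x Ω = 0 → x = 0)
    (ξ : H₀)
    (hξ : ∃ (x : ℕ → H₀ →L[ℂ] H₀) (η : H₀), (∀ n, x n ∈ M) ∧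
      Tendsto (fun n => x n Ω) atTop (nhds ξ) ∧
      Tendsto (fun n => star (x n) Ω) atTop (nhds η)) :
    (∀ y z : H₀ →L[ℂ] H₀, y ∈ M.commutant → z ∈ M.commutant → y Ω = z Ω → y ξ = z ξ) ∧
    (∀ (y : ℕ → H₀ →L[ℂ] H₀) (η : H₀), (∀ n, y n ∈ M.commutant) →
      Tendsto (fun n => y n Ω) atTop (nhds 0) →
      Tendsto (fun n => y n ξ) atTop (nhds η) → η = 0) := by
  obtain ⟨x, η, hxM, hxξ, hxη⟩ := hξ
  refine ⟨fun y z hy hz hyz => ?_, fun y ζ hy hyΩ hyξ => ?_⟩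
  · simpa [sub_eq_zero] using apply_eq_zero_of_tendsto hxM hxξ (sub_mem hy hz) (by simp [hyz])
  · exact eq_zero_of_tendsto_of_separating hxM hxξ hseparating hxη hy hyΩ hyξ

/-- preclosedness criterion, Proposition 6.1 of [Gui19d]: let `M = M(I)` be a von
Neumann algebra with commutant `M' = M(I')`, and let `Ω` be a cyclic and separating vector for
`M`. Let `ξ ∈ H₀` lie in the domain of the Tomita operator `S_I` (the closure of
`xΩ ↦ x*Ω`, `x ∈ M`), expressed by: there are `xₙ ∈ M` with `xₙΩ → ξ` and `xₙ*Ω` convergent.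
Then the operator `A_ξ : yΩ ↦ yξ` (`y ∈ M'`) is well defined and preclosed (the latter
expressed by closability of its graph: if `yₙ ∈ M'`, `yₙΩ → 0` and `yₙξ → η`, then `η = 0`). -/
theorem stmt9 (M : VonNeumannAlgebra H₀) (Ω : H₀)
    (hcyclic : Dense ((fun x : H₀ →L[ℂ] H₀ => x Ω) '' (M : Set (H₀ →L[ℂ] H₀))))
    (hseparating : ∀ x : H₀ →L[ℂ] H₀, x ∈ M → x Ω = 0 → x = 0)
    (ξ : H₀)
    (hξ : ∃ (x : ℕ → H₀ →L[ℂ] H₀) (η : H₀), (∀ n, x n ∈ M) ∧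
      Tendsto (fun n => x n Ω) atTop (nhds ξ) ∧
      Tendsto (fun n => star (x n) Ω) atTop (nhds η)) :
    (∀ y z : H₀ →L[ℂ] H₀, y ∈ M.commutant → z ∈ M.commutant → y Ω = z Ω → y ξ = z ξ) ∧
    (∀ (y : ℕ → H₀ →L[ℂ] H₀) (η : H₀), (∀ n, y n ∈ M.commutant) →
      Tendsto (fun n => y n Ω) atTop (nhds 0) →
      Tendsto (fun n => y n ξ) atTop (nhds η) → η = 0) :=
  stmt9_general M Ω hseparating ξ hξ
end

section
/- Let A and B be strongly commuting closed operators on H, and suppose ξ ∈ D(A*A) ∩ D(B*B). Then with the bounding projections q_s of A and f_t of B, the vector Bξ lies in D(A), the vector Aξ lies in D(B), and ABξ = BAξ equals the double limit lim_{s,t→∞} A q_s B f_t ξ. -/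
open Filter Topology

variable {H : Type*} [NormedAddCommGroup H] [InnerProductSpace ℂ H] [CompleteSpace H]

/-!
A bounded operator in the commutant `M'` is a combination of self-adjoint ones, and a self-adjoint
`a ∈ M'` generates the unitary group `exp (r • i a) ⊆ M'`; differentiating `A exp (r • i a) ⊆
exp (r • i a) A` at `r = 0` using closedness of `A` shows that every element of `M'` commutes with
`A`, hence also with `A*`. So `B f_t ∈ M'` commutes with `A`, `A*` and `q_s`, and `q_s ∈ N'`
commutes with `B`, `B*`. With `g (s, t) = A q_s B f_t ξ` this gives
`re ⟪g (s, t), g (s', t')⟫ = re ⟪q_{s ⊓ s'} B*Bξ, f_{t ⊓ t'} A*Aξ⟫`, whose convergence makes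
`g` Cauchy, say `g → L`. Since `A q_s η → Aη` for `η ∈ D(A*A)` (the same Cauchy argument for one
family), the iterated limits give `A q_s Bξ → L` and, as `g (s, t) = B f_t A q_s ξ`,
`B f_t Aξ → L`; closedness of `A` and `B` then yields `ABξ = L = BAξ`.
-/

theorem LinearPMap.IsClosed.exists_apply_eq_of_tendsto {R E F ι : Type*} [CommRing R]
    [AddCommGroup E] [AddCommGroup F] [Module R E] [Module R F] [TopologicalSpace E]
    [TopologicalSpace F] {A : E →ₗ.[R] F} (hA : A.IsClosed) {l : Filter ι} [l.NeBot]
    {u : ι → A.domain} {x : E} {y : F} (hu : Tendsto (fun i => (u i : E)) l (𝓝 x))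
    (hAu : Tendsto (fun i => A (u i)) l (𝓝 y)) : ∃ h : x ∈ A.domain, A ⟨x, h⟩ = y := by
  obtain ⟨z, rfl, rfl⟩ := A.mem_graph_iff.mp <|
    hA.mem_of_tendsto (hu.prodMk_nhds hAu) (Eventually.of_forall fun i => A.mem_graph (u i))
  exact ⟨z.2, rfl⟩

theorem tendsto_of_tendsto_prod_of_forall_tendsto {α β X : Type*} [TopologicalSpace X]
    [RegularSpace X] {la : Filter α} {lb : Filter β} [lb.NeBot] {g : α × β → X} {h : α → X}
    {L : X} (hg : Tendsto g (la ×ˢ lb) (𝓝 L))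
    (hh : ∀ a, Tendsto (fun b => g (a, b)) lb (𝓝 (h a))) : Tendsto h la (𝓝 L) := by
  rw [(closed_nhds_basis L).tendsto_right_iff]
  rintro V ⟨hV, hVc⟩
  filter_upwards [Filter.Eventually.curry (hg hV)] with a ha using hVc.mem_of_tendsto (hh a) ha

theorem cauchySeq_of_re_inner_eq_inf {𝕜 E ι : Type*} [RCLike 𝕜] [NormedAddCommGroup E]
    [InnerProductSpace 𝕜 E] [Nonempty ι] [Lattice ι] {g : ι → E}
    {c : ι → ℝ} {L : ℝ} (hgc : ∀ i j, RCLike.re (inner 𝕜 (g i) (g j)) = c (i ⊓ j))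
    (hc : Tendsto c atTop (𝓝 L)) : CauchySeq g := by
  have hdist : ∀ n : ι × ι,
      dist (g n.1) (g n.2) = √(c n.1 + c n.2 - 2 * c (n.1 ⊓ n.2)) := by
    intro n
    rw [dist_eq_norm, ← Real.sqrt_sq (norm_nonneg _), @norm_sub_sq 𝕜, @norm_sq_eq_re_inner 𝕜,
      @norm_sq_eq_re_inner 𝕜, hgc, hgc, hgc, inf_idem, inf_idem]
    ring_nf
  rw [cauchySeq_iff_tendsto_dist_atTop_0, funext hdist, ← prod_atTop_atTop_eq]
  have hlim := ((hc.comp tendsto_fst).add (hc.comp tendsto_snd)).sub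
    ((hc.comp (tendsto_inf_atTop _ tendsto_fst tendsto_snd)).const_mul 2)
  rw [show L + L - 2 * L = 0 by ring] at hlim
  simpa using hlim.sqrt

section CommutesWith

variable {E : Type*} [NormedAddCommGroup E] [NormedSpace ℂ E]

def CommutesWith (x : E →L[ℂ] E) (A : E →ₗ.[ℂ] E) : Prop :=
  ∀ ζ (hζ : ζ ∈ A.domain), ∃ h : x ζ ∈ A.domain, A ⟨x ζ, h⟩ = x (A ⟨ζ, hζ⟩)

variable {A : E →ₗ.[ℂ] E} {x y : E →L[ℂ] E}

theorem CommutesWith.add (hx : CommutesWith x A) (hy : CommutesWith y A) :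
    CommutesWith (x + y) A := by
  intro ζ hζ
  obtain ⟨hxζ, hAx⟩ := hx ζ hζ
  obtain ⟨hyζ, hAy⟩ := hy ζ hζ
  refine ⟨A.domain.add_mem hxζ hyζ, ?_⟩
  change A (⟨x ζ, hxζ⟩ + ⟨y ζ, hyζ⟩) = _
  rw [A.map_add, hAx, hAy]
  rfl

theorem CommutesWith.smul (hx : CommutesWith x A) (c : ℂ) : CommutesWith (c • x) A := by
  intro ζ hζ
  obtain ⟨hxζ, hAx⟩ := hx ζ hζ
  refine ⟨A.domain.smul_mem c hxζ, ?_⟩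
  change A (c • ⟨x ζ, hxζ⟩) = _
  rw [A.map_smul, hAx]
  rfl

theorem commutesWith_of_hasDerivAt (hA : A.IsClosed) {u : ℝ → E →L[ℂ] E}
    (hu : ∀ r, CommutesWith (u r) A) (hu₀ : u 0 = 1) (hderiv : HasDerivAt u x 0) :
    CommutesWith x A := by
  intro ζ hζ
  have hslope : ∀ v : E, Tendsto (fun r : ℝ => r⁻¹ • (u r v - v)) (𝓝[≠] 0) (𝓝 (x v)) := by
    intro v
    have := ((ContinuousLinearMap.apply ℂ E v).continuous.tendsto _).comp
      (hasDerivAt_iff_tendsto_slope_zero.mp hderiv)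
    simpa [Function.comp_def, hu₀] using this
  let slope : ℝ → A.domain := fun r => r⁻¹ • (⟨u r ζ, (hu r ζ hζ).1⟩ - ⟨ζ, hζ⟩)
  have hAslope : ∀ r, A (slope r) = r⁻¹ • (u r (A ⟨ζ, hζ⟩) - A ⟨ζ, hζ⟩) := fun r => by
    change A.toFun _ = _
    rw [A.toFun.map_smul_of_tower, map_sub]
    exact congrArg (fun z => r⁻¹ • (z - A ⟨ζ, hζ⟩)) (hu r ζ hζ).2
  exact hA.exists_apply_eq_of_tendsto (u := slope) (hslope ζ) (by simpa [hAslope] using hslope _)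

end CommutesWith

theorem CommutesWith.adjoint {A : H →ₗ.[ℂ] H} {x : H →L[ℂ] H} (hAd : Dense (A.domain : Set H))
    (hx : CommutesWith (ContinuousLinearMap.adjoint x) A) : CommutesWith x A.adjoint := by
  intro η hη
  have key : ∀ v : A.domain,
      inner ℂ (x (A.adjoint ⟨η, hη⟩)) (v : H) = inner ℂ (x η) (A v) := fun v => by
    obtain ⟨hxv, hAxv⟩ := hx v v.2
    rw [← ContinuousLinearMap.adjoint_inner_right, ← ContinuousLinearMap.adjoint_inner_right,
      ← hAxv]
    exact LinearPMap.adjoint_isFormalAdjoint hAd ⟨η, hη⟩ ⟨_, hxv⟩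
  have hxη := LinearPMap.mem_adjoint_domain_of_exists _ ⟨_, key⟩
  exact ⟨hxη, LinearPMap.adjoint_apply_eq hAd ⟨_, hxη⟩ key⟩

theorem CommutesWith.adjoint_apply_apply {A : H →ₗ.[ℂ] H} {x : H →L[ℂ] H}
    (hx : CommutesWith x A) (hx' : CommutesWith x A.adjoint) {ξ : H} (hξ : ξ ∈ A.domain)
    (hAξ : A ⟨ξ, hξ⟩ ∈ A.adjoint.domain) :
    ∃ (h : x ξ ∈ A.domain) (h' : A ⟨x ξ, h⟩ ∈ A.adjoint.domain),
      A.adjoint ⟨A ⟨x ξ, h⟩, h'⟩ = x (A.adjoint ⟨A ⟨ξ, hξ⟩, hAξ⟩) := by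
  obtain ⟨h, e⟩ := hx ξ hξ
  obtain ⟨h', e'⟩ := hx' _ hAξ
  exact ⟨h, e ▸ h', by rw [← e']; exact congrArg A.adjoint (Subtype.ext e)⟩

namespace Affiliated

variable {M : VonNeumannAlgebra H} {A : H →ₗ.[ℂ] H}

theorem commutesWith_of_mem_unitary (hA : Affiliated M A) {u : H →L[ℂ] H}
    (hu : u ∈ M.commutant) (hu' : u ∈ unitary (H →L[ℂ] H)) : CommutesWith u A :=
  fun ζ hζ => ⟨(hA u hu hu').1 ζ hζ, (hA u hu hu').2 ⟨ζ, hζ⟩ _⟩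

theorem commutesWith_of_isSelfAdjoint (hA : Affiliated M A) (hAc : A.IsClosed)
    {a : H →L[ℂ] H} (ha : a ∈ M.commutant) (hsa : IsSelfAdjoint a) : CommutesWith a A := by
  -- `exp_mem_unitary_of_mem_skewAdjoint` is stated for `ℚ`-algebras
  let : NormedAlgebra ℚ (H →L[ℂ] H) := .restrictScalars ℚ ℂ (H →L[ℂ] H)
  set c := Complex.I • a
  have hskew : c ∈ skewAdjoint (H →L[ℂ] H) := hsa.smul_mem_skewAdjoint Complex.conj_I
  have hexp_mem : ∀ r : ℝ, NormedSpace.exp (r • c) ∈ M.commutant := fun r =>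
    VonNeumannAlgebra.mem_commutant_iff.mpr fun g hg => by
      have hga : Commute g a := VonNeumannAlgebra.mem_commutant_iff.mp ha g hg
      exact ((hga.smul_right Complex.I).smul_right r).exp_right.eq
  have hexp : ∀ r : ℝ, CommutesWith (NormedSpace.exp (r • c)) A := fun r =>
    hA.commutesWith_of_mem_unitary (hexp_mem r)
      (NormedSpace.exp_mem_unitary_of_mem_skewAdjoint (skewAdjoint.smul_mem r hskew))
  have hc : CommutesWith c A := commutesWith_of_hasDerivAt hAc hexp (by simp)
    (by simpa using hasDerivAt_exp_smul_const c (0 : ℝ))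
  simpa [c, smul_smul] using hc.smul (-Complex.I)

theorem commutesWith (hA : Affiliated M A) (hAc : A.IsClosed) {x : H →L[ℂ] H}
    (hx : x ∈ M.commutant) : CommutesWith x A := by
  have hre : (realPart x : H →L[ℂ] H) ∈ M.commutant := by
    rw [realPart_apply_coe, ← Complex.coe_smul]
    exact M.commutant.smul_mem (add_mem hx (star_mem hx)) _
  have him : (imaginaryPart x : H →L[ℂ] H) ∈ M.commutant := by
    rw [imaginaryPart_apply_coe, ← Complex.coe_smul]
    exact M.commutant.smul_mem (M.commutant.smul_mem (sub_mem hx (star_mem hx)) _) _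
  rw [← realPart_add_I_smul_imaginaryPart x]
  exact (hA.commutesWith_of_isSelfAdjoint hAc hre (realPart x).2).add
    ((hA.commutesWith_of_isSelfAdjoint hAc him (imaginaryPart x).2).smul _)

theorem commutesWith_adjoint (hA : Affiliated M A) (hAc : A.IsClosed)
    (hAd : Dense (A.domain : Set H)) {x : H →L[ℂ] H} (hx : x ∈ M.commutant) :
    CommutesWith x A.adjoint :=
  CommutesWith.adjoint hAd <| hA.commutesWith hAc <| by
    rw [← ContinuousLinearMap.star_eq_adjoint]; exact star_mem hx

end Affiliated

namespace IsRightBoundingFamily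

variable {A : H →ₗ.[ℂ] H} {q : ℝ → H →L[ℂ] H}

theorem mul_eq_min (hq : IsRightBoundingFamily A q) (s s' : ℝ) : q s * q s' = q (min s s') := by
  rcases le_total s s' with h | h
  · rw [min_eq_left h, hq.mono s s' h]
  · rw [min_eq_right h, ← (hq.proj s').2.star_eq, ← (hq.proj s).2.star_eq, ← star_mul,
      hq.mono s' s h]

def clm (hq : IsRightBoundingFamily A q) (s : ℝ) : H →L[ℂ] H :=
  (A.toFun ∘ₗ LinearMap.codRestrict A.domain (q s : H →ₗ[ℂ] H) (hq.mem_domain s)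
    ).mkContinuousOfExistsBound (hq.bounded s)

theorem clm_apply (hq : IsRightBoundingFamily A q) (s : ℝ) (ζ : H) :
    hq.clm s ζ = A ⟨q s ζ, hq.mem_domain s ζ⟩ := rfl

theorem inner_clm_apply_clm_apply (hq : IsRightBoundingFamily A q)
    (hAd : Dense (A.domain : Set H)) {η w : H} (hη : η ∈ A.domain)
    (hAη : A ⟨η, hη⟩ ∈ A.adjoint.domain) (hw : A.adjoint ⟨A ⟨η, hη⟩, hAη⟩ = w)
    (s s' : ℝ) (y : H) : inner ℂ (hq.clm s η) (hq.clm s' y) = inner ℂ w (q (min s s') y) := by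
  obtain ⟨h, e⟩ := hq.compat s η hη hAη
  rw [clm_apply, clm_apply, ← LinearPMap.adjoint_isFormalAdjoint hAd ⟨_, h⟩, e, hw]
  calc inner ℂ (q s w) (q s' y) = inner ℂ w (q s (q s' y)) := (hq.proj s).2.isSymmetric w _
    _ = inner ℂ w (q (min s s') y) := by rw [← hq.mul_eq_min]; rfl

theorem tendsto_clm_apply (hq : IsRightBoundingFamily A q) (hAc : A.IsClosed)
    (hAd : Dense (A.domain : Set H)) {η : H} (hη : η ∈ A.domain)
    (hAη : A ⟨η, hη⟩ ∈ A.adjoint.domain) :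
    Tendsto (fun s => hq.clm s η) atTop (𝓝 (A ⟨η, hη⟩)) := by
  set w := A.adjoint ⟨A ⟨η, hη⟩, hAη⟩
  have hcauchy : CauchySeq fun s => hq.clm s η :=
    cauchySeq_of_re_inner_eq_inf (𝕜 := ℂ)
      (fun s s' => congrArg RCLike.re (hq.inner_clm_apply_clm_apply hAd hη hAη rfl s s' η))
      ((RCLike.continuous_re.tendsto _).comp
        ((tendsto_const_nhds (x := w)).inner (hq.tendsto_one η)))
  obtain ⟨v, hv⟩ := cauchySeq_tendsto_of_complete hcauchy
  obtain ⟨h, rfl⟩ := hAc.exists_apply_eq_of_tendsto (hq.tendsto_one η) hv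
  exact hv

theorem commute_clm (hq : IsRightBoundingFamily A q) {x : H →L[ℂ] H} (hx : CommutesWith x A)
    {s : ℝ} (hxq : Commute x (q s)) : Commute x (hq.clm s) := by
  ext v
  obtain ⟨h, e⟩ := hx _ (hq.mem_domain s v)
  change x (A ⟨q s v, _⟩) = A ⟨q s (x v), _⟩
  rw [← e]
  exact congrArg A (Subtype.ext (congrArg (· v) hxq.eq))

end IsRightBoundingFamily

section StronglyCommuting

variable {M N : VonNeumannAlgebra H} {A B : H →ₗ.[ℂ] H} {q f : ℝ → H →L[ℂ] H}

theorem IsRightBoundingFamily.clm_mem_commutant (hf : IsRightBoundingFamily B f)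
    (hB : Affiliated N B) (hBc : B.IsClosed) (hMN : ∀ x ∈ M, ∀ y ∈ N, Commute x y) (t : ℝ) :
    hf.clm t ∈ M.commutant :=
  VonNeumannAlgebra.mem_commutant_iff.mpr fun g hg =>
    (hf.commute_clm (hB.commutesWith hBc (VonNeumannAlgebra.mem_commutant_iff.mpr
      fun y hy => (hMN g hg y hy).eq.symm)) (hMN g hg _ (hf.mem_vN N hB t))).eq

theorem IsRightBoundingFamily.clm_apply_clm_apply_comm (hq : IsRightBoundingFamily A q)
    (hf : IsRightBoundingFamily B f) (hMN : ∀ x ∈ M, ∀ y ∈ N, Commute x y)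
    (hA : Affiliated M A) (hB : Affiliated N B) (hAc : A.IsClosed) (hBc : B.IsClosed)
    (s t : ℝ) (ξ : H) : hq.clm s (hf.clm t ξ) = hf.clm t (hq.clm s ξ) := by
  have hR := hf.clm_mem_commutant hB hBc hMN t
  obtain ⟨h, e⟩ := hA.commutesWith hAc hR (q s ξ) (hq.mem_domain s ξ)
  rw [hq.clm_apply, hq.clm_apply, ← e]
  exact congrArg A <| Subtype.ext <|
    congrArg (· ξ) (VonNeumannAlgebra.mem_commutant_iff.mp hR (q s) (hq.mem_vN M hA s))

theorem IsRightBoundingFamily.re_inner_clm_clm_apply (hq : IsRightBoundingFamily A q)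
    (hf : IsRightBoundingFamily B f) (hMN : ∀ x ∈ M, ∀ y ∈ N, Commute x y)
    (hA : Affiliated M A) (hB : Affiliated N B) (hAc : A.IsClosed) (hBc : B.IsClosed)
    (hAd : Dense (A.domain : Set H)) (hBd : Dense (B.domain : Set H))
    {ξ : H} (hξA : ξ ∈ A.domain) (hξB : ξ ∈ B.domain)
    (hAA : A ⟨ξ, hξA⟩ ∈ A.adjoint.domain) (hBB : B ⟨ξ, hξB⟩ ∈ B.adjoint.domain)
    (s t s' t' : ℝ) :
    RCLike.re (inner ℂ (hq.clm s (hf.clm t ξ)) (hq.clm s' (hf.clm t' ξ))) =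
      RCLike.re (inner ℂ (q (min s s') (B.adjoint ⟨B ⟨ξ, hξB⟩, hBB⟩))
        (f (min t t') (A.adjoint ⟨A ⟨ξ, hξA⟩, hAA⟩))) := by
  have hR := hf.clm_mem_commutant hB hBc hMN
  have hqN : q (min s s') ∈ N.commutant := VonNeumannAlgebra.mem_commutant_iff.mpr
    fun y hy => (hMN _ (hq.mem_vN M hA _) y hy).eq.symm
  obtain ⟨h₁, h₁', e₁⟩ := (hA.commutesWith hAc (hR t)).adjoint_apply_apply
    (hA.commutesWith_adjoint hAc hAd (hR t)) hξA hAA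
  obtain ⟨h₂, h₂', e₂⟩ := (hB.commutesWith hBc hqN).adjoint_apply_apply
    (hB.commutesWith_adjoint hBc hBd hqN) hξB hBB
  have hcomm : q (min s s') (hf.clm t' ξ) = hf.clm t' (q (min s s') ξ) :=
    congrArg (· ξ) (VonNeumannAlgebra.mem_commutant_iff.mp (hR t') _ (hq.mem_vN M hA _))
  -- `A*A` commutes with `B f_t` and `B*B` with `q_m`, so both inner products reduce to bounded data
  rw [hq.inner_clm_apply_clm_apply hAd h₁ h₁' e₁, hcomm, ← inner_conj_symm, RCLike.conj_re,
    hf.inner_clm_apply_clm_apply hBd h₂ h₂' e₂, min_comm t' t]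

theorem IsRightBoundingFamily.exists_tendsto_clm_clm_apply (hq : IsRightBoundingFamily A q)
    (hf : IsRightBoundingFamily B f) (hMN : ∀ x ∈ M, ∀ y ∈ N, Commute x y)
    (hA : Affiliated M A) (hB : Affiliated N B) (hAc : A.IsClosed) (hBc : B.IsClosed)
    (hAd : Dense (A.domain : Set H)) (hBd : Dense (B.domain : Set H))
    {ξ : H} (hξA : ξ ∈ A.domain) (hξB : ξ ∈ B.domain)
    (hAA : A ⟨ξ, hξA⟩ ∈ A.adjoint.domain) (hBB : B ⟨ξ, hξB⟩ ∈ B.adjoint.domain) :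
    ∃ L, Tendsto (fun p : ℝ × ℝ => hq.clm p.1 (hf.clm p.2 ξ)) (atTop ×ˢ atTop) (𝓝 L) := by
  have hc : Tendsto (fun p : ℝ × ℝ => RCLike.re (inner ℂ (q p.1 (B.adjoint ⟨B ⟨ξ, hξB⟩, hBB⟩))
      (f p.2 (A.adjoint ⟨A ⟨ξ, hξA⟩, hAA⟩)))) atTop
      (𝓝 (RCLike.re (inner ℂ (B.adjoint ⟨B ⟨ξ, hξB⟩, hBB⟩) (A.adjoint ⟨A ⟨ξ, hξA⟩, hAA⟩)))) := by
    rw [← prod_atTop_atTop_eq]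
    exact (RCLike.continuous_re.tendsto _).comp
      (((hq.tendsto_one _).comp tendsto_fst).inner ((hf.tendsto_one _).comp tendsto_snd))
  have hcauchy := cauchySeq_of_re_inner_eq_inf (fun p p' =>
    hq.re_inner_clm_clm_apply hf hMN hA hB hAc hBc hAd hBd hξA hξB hAA hBB p.1 p.2 p'.1 p'.2) hc
  rw [prod_atTop_atTop_eq]
  exact cauchySeq_tendsto_of_complete hcauchy

end StronglyCommuting

/-- Lemma 1.A.5 + Proposition 1.A.6(b): if `A`, `B` are strongly commuting
densely defined closed operators and `ξ ∈ D(A*A) ∩ D(B*B)`, then `Bξ ∈ D(A)`, `Aξ ∈ D(B)`,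
`ABξ = BAξ`, and this common value equals the double limit `lim_{s,t→∞} A q_s B f_t ξ`
formed with the right bounding projections `q` of `A` and `f` of `B`. -/
theorem stmt12 (A B : H →ₗ.[ℂ] H)
    (hAc : A.IsClosed) (hBc : B.IsClosed)
    (hAd : Dense (A.domain : Set H)) (hBd : Dense (B.domain : Set H))
    (hAB : StronglyCommutes A B)
    (q f : ℝ → H →L[ℂ] H)
    (hq : IsRightBoundingFamily A q) (hf : IsRightBoundingFamily B f)
    (ξ : H) (hξA : ξ ∈ A.domain) (hξB : ξ ∈ B.domain)
    (hAA : A ⟨ξ, hξA⟩ ∈ A.adjoint.domain)   -- `ξ ∈ D(A*A)`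
    (hBB : B ⟨ξ, hξB⟩ ∈ B.adjoint.domain) : -- `ξ ∈ D(B*B)`
    ∃ (h₁ : B ⟨ξ, hξB⟩ ∈ A.domain) (h₂ : A ⟨ξ, hξA⟩ ∈ B.domain),
      A ⟨B ⟨ξ, hξB⟩, h₁⟩ = B ⟨A ⟨ξ, hξA⟩, h₂⟩ ∧
      Tendsto (fun st : ℝ × ℝ =>
          A ⟨q st.1 (B ⟨f st.2 ξ, hf.mem_domain st.2 ξ⟩), hq.mem_domain st.1 _⟩)
        (atTop ×ˢ atTop) (nhds (A ⟨B ⟨ξ, hξB⟩, h₁⟩)) := by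
  obtain ⟨M, N, hMN, hA, hB⟩ := hAB
  obtain ⟨L, hL⟩ :=
    hq.exists_tendsto_clm_clm_apply hf hMN hA hB hAc hBc hAd hBd hξA hξB hAA hBB
  have hBξ : Tendsto (fun s => hq.clm s (B ⟨ξ, hξB⟩)) atTop (𝓝 L) :=
    tendsto_of_tendsto_prod_of_forall_tendsto hL fun s =>
      ((hq.clm s).continuous.tendsto _).comp (hf.tendsto_clm_apply hBc hBd hξB hBB)
  have hAξ : Tendsto (fun t => hf.clm t (A ⟨ξ, hξA⟩)) atTop (𝓝 L) := by
    refine tendsto_of_tendsto_prod_of_forall_tendsto (hL.comp (tendsto_snd.prodMk tendsto_fst))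
      fun t => ?_
    simpa only [Function.comp_def, hq.clm_apply_clm_apply_comm hf hMN hA hB hAc hBc] using
      ((hf.clm t).continuous.tendsto _).comp (hq.tendsto_clm_apply hAc hAd hξA hAA)
  obtain ⟨h₁, hABξ⟩ := hAc.exists_apply_eq_of_tendsto (hq.tendsto_one _) hBξ
  obtain ⟨h₂, hBAξ⟩ := hBc.exists_apply_eq_of_tendsto (hf.tendsto_one _) hAξ
  exact ⟨h₁, h₂, hABξ.trans hBAξ.symm, hABξ ▸ hL⟩
end
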